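/- Let p/q be a convergent of the continued fraction expansion of √3 and ε = |p/q − √3|. Then ε < 1/q². Consequently, for the cubic polynomial P_q(X) obtained by clearing denominators in P(X, p/q) where P(X,Y) = (-X²/3 + X³/2 + 2X/3 − 1)Y + X³ − X² + 1, one has nonzero roots α, β with 0 < ||α| − |β|| = O(q^{-4}) while the height of P_q is O(q). -/

import Mathlib

/-!
Convergents of an irrational `ξ` satisfy `|ξ - pₙ/qₙ| ≤ 1/(qₙ qₙ₊₁) ≤ 1/qₙ²`, and equality is
impossible since it would make `ξ` rational. For `ξ = √3` and `v = p/q` this gives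
`|v² - 3| ≤ 4/q²`.

At `v = √3` the cubic `P(X, v)` has the real root `w = √3 - 1 = 2v/(v + 3)` and two complex roots
of modulus `w`. For `v` near `√3` one has `P(w, v) = 3(v² - 3)²/(v + 3)³ > 0` while `P(·, v)` has
slope at least `1` near `w`, so `P(·, v)` has a real root `α` with `0 < w - α ≤ P(w, v)`. The
remaining roots `β, β̄` are the non-real roots of the quotient `P(X, v)/(X - α)`, and their product
gives `|β|² - α² = (v + 3)(w - α)/(3(v/2 + 1))`. Hence `0 < |β| - α = O((v² - 3)²) = O(q⁻⁴)`.
-/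

theorem Irrational.abs {x : ℝ} (h : Irrational x) : Irrational |x| := by
  rcases abs_choice x with hx | hx <;> rw [hx]
  exacts [h, h.neg]

namespace GenContFract

open GenContFract (of)

variable {ξ : ℝ}

theorem not_terminatedAt_of_irrational (hξ : Irrational ξ) (n : ℕ) : ¬(of ξ).TerminatedAt n :=
  fun h => let ⟨q, hq⟩ := (terminates_iff_rat ξ).1 ⟨n, h⟩; hξ.ne_rat q hq

theorem one_le_dens_of_irrational (hξ : Irrational ξ) (n : ℕ) : 1 ≤ (of ξ).dens n := by
  have hfib : (1 : ℝ) ≤ Nat.fib (n + 1) := by exact_mod_cast Nat.fib_pos.2 n.succ_pos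
  exact hfib.trans (succ_nth_fib_le_of_nth_den (Or.inr (not_terminatedAt_of_irrational hξ _)))

theorem abs_convs_sub_lt_of_irrational (hξ : Irrational ξ) (n : ℕ) :
    |(of ξ).convs n - ξ| < 1 / (of ξ).dens n ^ 2 := by
  have hq := one_le_dens_of_irrational hξ n
  have hle : |(of ξ).convs n - ξ| ≤ 1 / (of ξ).dens n ^ 2 := by
    rw [abs_sub_comm, sq]
    refine (abs_sub_convs_le (not_terminatedAt_of_irrational hξ n)).trans ?_
    gcongr
    exact of_den_mono
  refine hle.lt_of_ne fun heq => ?_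
  obtain ⟨c, hc⟩ := exists_rat_eq_nth_conv ξ n
  obtain ⟨d, hd⟩ := exists_rat_eq_nth_den ξ n
  rw [hc, hd] at heq
  exact (hξ.ratCast_sub c).abs.ne_rat (1 / d ^ 2) (by push_cast; exact heq)

end GenContFract

theorem sq_sub_three_sq_le_of_abs_sub_sqrt_le {v ε : ℝ} (hv0 : 0 ≤ v) (hv2 : v ≤ 2)
    (h : |v - √3| ≤ ε) :
    (v ^ 2 - 3) ^ 2 ≤ 16 * ε ^ 2 := by
  have hsqrt : √3 ≤ 2 := by rw [Real.sqrt_le_left (by norm_num)]; norm_num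
  have hsum : (v + √3) ^ 2 ≤ 16 := by nlinarith [Real.sqrt_nonneg 3]
  have hdiff : (v - √3) ^ 2 ≤ ε ^ 2 := by
    rw [← sq_abs]; exact pow_le_pow_left₀ (abs_nonneg _) h 2
  calc (v ^ 2 - 3) ^ 2 = (v - √3) ^ 2 * (v + √3) ^ 2 := by
        linear_combination (2 * v ^ 2 - 3 - √3 ^ 2) * Real.sq_sqrt (by norm_num : (0 : ℝ) ≤ 3)
    _ ≤ ε ^ 2 * 16 := mul_le_mul hdiff hsum (sq_nonneg _) (sq_nonneg _)
    _ = 16 * ε ^ 2 := mul_comm _ _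

open Complex in
theorem exists_complex_root_norm_sq_eq_of_discrim_neg {a b c : ℝ} (ha : 0 < a)
    (hD : discrim a b c < 0) :
    ∃ β : ℂ, a * β ^ 2 + b * β + c = 0 ∧ ‖β‖ ^ 2 = c / a := by
  set s := √(-discrim a b c)
  have hs : s ^ 2 = 4 * a * c - b ^ 2 := by
    rw [Real.sq_sqrt (by linarith), discrim]; ring
  have hsC : (s : ℂ) ^ 2 = 4 * a * c - b ^ 2 := by exact_mod_cast hs
  have haC : (a : ℂ) ≠ 0 := by exact_mod_cast ha.ne'
  refine ⟨(-b + s * I) / (2 * a), ?_, ?_⟩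
  · field_simp
    linear_combination (s : ℂ) ^ 2 * I_sq - hsC
  · rw [← ofReal_neg, Complex.sq_norm, normSq_div, normSq_add_mul_I, ← ofReal_ofNat, ← ofReal_mul,
      normSq_ofReal, hs]
    field_simp
    ring

def cubicP {K : Type*} [Field K] (x y : K) : K :=
  (-(x ^ 2) / 3 + x ^ 3 / 2 + 2 * x / 3 - 1) * y + x ^ 3 - x ^ 2 + 1

@[norm_cast]
theorem cubicP_ofReal (x y : ℝ) : cubicP (x : ℂ) y = cubicP x y := by
  unfold cubicP; push_cast; ring

noncomputable def approxRoot (v : ℝ) : ℝ := 2 * v / (v + 3)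

section

variable {v : ℝ}

theorem cubicP_approxRoot (hv : v + 3 ≠ 0) :
    cubicP (approxRoot v) v = 3 * (v ^ 2 - 3) ^ 2 / (v + 3) ^ 3 := by
  unfold cubicP approxRoot
  field_simp
  ring

theorem cubicP_two_thirds_neg (hv : 23 / 15 < v) : cubicP (2 / 3 : ℝ) v < 0 := by
  unfold cubicP
  linarith

theorem approxRoot_mem_Ioo (hv : v ∈ Set.Icc (1.7 : ℝ) 1.75) :
    approxRoot v ∈ Set.Ioo (2 / 3 : ℝ) (3 / 4) := by
  obtain ⟨h1, h2⟩ := hv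
  unfold approxRoot
  constructor
  · rw [lt_div_iff₀ (by linarith)]; linarith
  · rw [div_lt_iff₀ (by linarith)]; linarith

theorem sub_le_cubicP_sub_cubicP (hv : v ∈ Set.Icc (1.7 : ℝ) 1.75) {x y : ℝ} (hy : 2 / 3 ≤ y)
    (hyx : y ≤ x) (hx : x ≤ 3 / 4) : x - y ≤ cubicP x v - cubicP y v := by
  obtain ⟨h1, h2⟩ := hv
  have hS : 4 / 3 ≤ x ^ 2 + x * y + y ^ 2 := by nlinarith
  have hslope : 1 ≤ (v / 2 + 1) * (x ^ 2 + x * y + y ^ 2) - (v / 3 + 1) * (x + y) + 2 * v / 3 := by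
    nlinarith [mul_le_mul_of_nonneg_left hS (by linarith : 0 ≤ v / 2 + 1),
      mul_le_mul_of_nonneg_left (by linarith : x + y ≤ 3 / 2) (by linarith : 0 ≤ v / 3 + 1)]
  have hfactor : cubicP x v - cubicP y v
      = (x - y) * ((v / 2 + 1) * (x ^ 2 + x * y + y ^ 2) - (v / 3 + 1) * (x + y) + 2 * v / 3) := by
    unfold cubicP; ring
  rw [hfactor]
  nlinarith

theorem discrim_cubicP_quotient_neg (hv : v ∈ Set.Icc (1.7 : ℝ) 1.75) {α : ℝ} (h1 : 2 / 3 ≤ α)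
    (h2 : α ≤ 3 / 4) :
    discrim (v / 2 + 1) (-(v / 3 + 1) + (v / 2 + 1) * α)
      (2 * v / 3 - (v / 3 + 1) * α + (v / 2 + 1) * α ^ 2) < 0 := by
  obtain ⟨hv1, hv2⟩ := hv
  unfold discrim
  nlinarith

theorem exists_cubicP_root_near_approxRoot (hv : v ∈ Set.Icc (1.7 : ℝ) 1.75) (h3 : v ^ 2 ≠ 3) :
    ∃ α : ℝ, cubicP α v = 0 ∧ 2 / 3 ≤ α ∧ 0 < approxRoot v - α ∧
      approxRoot v - α ≤ 3 * (v ^ 2 - 3) ^ 2 / (v + 3) ^ 3 := by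
  obtain ⟨hw1, hw2⟩ := approxRoot_mem_Ioo hv
  have hP := cubicP_approxRoot (v := v) (by linarith [hv.1])
  have hPpos : 0 < cubicP (approxRoot v) v := by
    have : v ^ 2 - 3 ≠ 0 := sub_ne_zero.2 h3
    have : 0 < v + 3 := by linarith [hv.1]
    rw [hP]; positivity
  have hcont : Continuous fun x : ℝ => cubicP x v := by unfold cubicP; fun_prop
  obtain ⟨α, ⟨hα1, hα2⟩, hα : cubicP α v = 0⟩ := intermediate_value_Icc hw1.le hcont.continuousOn
    ⟨(cubicP_two_thirds_neg (by linarith [hv.1])).le, hPpos.le⟩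
  have hαw : α ≠ approxRoot v := by rintro rfl; exact hPpos.ne' hα
  have hslope := sub_le_cubicP_sub_cubicP hv hα1 hα2 hw2.le
  rw [hα, sub_zero, hP] at hslope
  exact ⟨α, hα, hα1, sub_pos.2 (hα2.lt_of_ne hαw), hslope⟩

theorem exists_cubicP_roots_abs_norm_sub_le (hv : v ∈ Set.Icc (1.7 : ℝ) 1.75) (h3 : v ^ 2 ≠ 3) :
    ∃ α β : ℂ, cubicP α v = 0 ∧ cubicP β v = 0 ∧ α ≠ 0 ∧ β ≠ 0 ∧
      0 < |‖α‖ - ‖β‖| ∧ |‖α‖ - ‖β‖| ≤ (v ^ 2 - 3) ^ 2 := by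
  obtain ⟨α, hα, hα1, hgap, hgap_le⟩ := exists_cubicP_root_near_approxRoot hv h3
  have ⟨hv1, hv2⟩ := hv
  have hα2 : α ≤ 3 / 4 := by linarith [(approxRoot_mem_Ioo hv).2]
  obtain ⟨β, hβ, hβnorm⟩ := exists_complex_root_norm_sq_eq_of_discrim_neg
    (by linarith : 0 < v / 2 + 1) (discrim_cubicP_quotient_neg hv hα1 hα2)
  have hβroot : cubicP β v = 0 := by
    have hαC : cubicP (α : ℂ) v = 0 := by exact_mod_cast hα
    push_cast at hβ
    unfold cubicP at hαC ⊢
    linear_combination (β - α) * hβ + hαC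
  have hnorm_sq : ‖β‖ ^ 2 - α ^ 2 = (v + 3) * (approxRoot v - α) / (3 * (v / 2 + 1)) := by
    rw [hβnorm]; unfold approxRoot; field_simp; ring
  have hpos : 0 < ‖β‖ ^ 2 - α ^ 2 := by
    rw [hnorm_sq]; apply div_pos <;> nlinarith
  have hle : ‖β‖ ^ 2 - α ^ 2 ≤ (v ^ 2 - 3) ^ 2 := by
    rw [hnorm_sq]
    calc (v + 3) * (approxRoot v - α) / (3 * (v / 2 + 1))
        ≤ (v + 3) * (3 * (v ^ 2 - 3) ^ 2 / (v + 3) ^ 3) / (3 * (v / 2 + 1)) := by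
          gcongr
      _ = (v ^ 2 - 3) ^ 2 / ((v / 2 + 1) * (v + 3) ^ 2) := by
          field_simp
      _ ≤ (v ^ 2 - 3) ^ 2 := div_le_self (sq_nonneg _) (by nlinarith)
  have hαβ : α < ‖β‖ := by nlinarith [norm_nonneg β]
  have hnormα : ‖(α : ℂ)‖ = α := Complex.norm_of_nonneg (by linarith)
  refine ⟨α, β, by exact_mod_cast hα, hβroot, by exact_mod_cast (by linarith : α ≠ 0),
    norm_pos_iff.1 (by linarith), ?_, ?_⟩
  · rw [hnormα, abs_sub_comm, abs_of_pos (sub_pos.2 hαβ)]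
    linarith
  · rw [hnormα, abs_sub_comm, abs_of_pos (sub_pos.2 hαβ)]
    nlinarith

end

/-- Convergents `p/q` of the continued fraction of `√3` satisfy
`ε := |p/q − √3| < 1/q²`; consequently the cubic `P_q(X) = 6q·P(X, p/q)`,
where `P(X,Y) = (-X²/3 + X³/2 + 2X/3 − 1)Y + X³ − X² + 1`, has height `O(q)`
and two nonzero roots `α, β` with `0 < ||α| − |β|| = O(q⁻⁴)`. -/
theorem convergents_sqrt3_cubic_abs_sep :
    (∀ n : ℕ,
      |(GenContFract.of (Real.sqrt 3)).convs n - Real.sqrt 3| <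
        1 / ((GenContFract.of (Real.sqrt 3)).dens n) ^ 2) ∧
    ∃ C : ℝ, 0 < C ∧ ∃ N : ℕ, ∀ n : ℕ, N ≤ n →
      (let v := (GenContFract.of (Real.sqrt 3)).convs n
       let q := (GenContFract.of (Real.sqrt 3)).dens n
       (|6 * q * (v / 2 + 1)| ≤ C * q ∧ |6 * q * (-(v / 3) - 1)| ≤ C * q ∧
        |6 * q * (2 * v / 3)| ≤ C * q ∧ |6 * q * (1 - v)| ≤ C * q) ∧
       ∃ α β : ℂ,
         (-(α ^ 2) / 3 + α ^ 3 / 2 + 2 * α / 3 - 1) * (v : ℂ)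
             + α ^ 3 - α ^ 2 + 1 = 0 ∧
         (-(β ^ 2) / 3 + β ^ 3 / 2 + 2 * β / 3 - 1) * (v : ℂ)
             + β ^ 3 - β ^ 2 + 1 = 0 ∧
         α ≠ 0 ∧ β ≠ 0 ∧
         0 < |‖α‖ - ‖β‖| ∧
         |‖α‖ - ‖β‖| ≤ C / q ^ 4) := by
  have hirr : Irrational √3 := by simpa using Nat.prime_three.irrational_sqrt
  have happrox := GenContFract.abs_convs_sub_lt_of_irrational hirr
  have hnear : ∀ᶠ n in Filter.atTop, (GenContFract.of √3).convs n ∈ Set.Icc (1.7 : ℝ) 1.75 := by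
    refine (GenContFract.of_convergence √3).eventually (Icc_mem_nhds ?_ ?_)
    · rw [Real.lt_sqrt (by norm_num)]; norm_num
    · rw [Real.sqrt_lt' (by norm_num)]; norm_num
  obtain ⟨N, hN⟩ := Filter.eventually_atTop.1 hnear
  refine ⟨happrox, 16, by norm_num, N, fun n hn => ?_⟩
  set v := (GenContFract.of √3).convs n
  set q := (GenContFract.of √3).dens n
  obtain ⟨hv1, hv2⟩ := hN n hn
  have hq : 0 ≤ q := zero_le_one.trans (GenContFract.one_le_dens_of_irrational hirr n)
  have hv3 : v ^ 2 ≠ 3 := fun h => by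
    obtain ⟨c, hc⟩ := GenContFract.exists_rat_eq_nth_conv √3 n
    refine hirr.ne_rat c ?_
    rw [← hc, Real.sqrt_eq_iff_eq_sq (by norm_num) (by linarith), h]
  have height (x : ℝ) (hx1 : -2 ≤ x) (hx2 : x ≤ 2) : |6 * q * x| ≤ 16 * q := by
    rw [abs_mul, abs_of_nonneg (by positivity)]; nlinarith [abs_le.2 ⟨hx1, hx2⟩]
  obtain ⟨α, β, hα, hβ, hα0, hβ0, hsep, hsep_le⟩ :=
    exists_cubicP_roots_abs_norm_sub_le ⟨hv1, hv2⟩ hv3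
  have hsep_le_q : |‖α‖ - ‖β‖| ≤ 16 / q ^ 4 :=
    calc |‖α‖ - ‖β‖| ≤ (v ^ 2 - 3) ^ 2 := hsep_le
      _ ≤ 16 * (1 / q ^ 2) ^ 2 :=
        sq_sub_three_sq_le_of_abs_sub_sqrt_le (by linarith) (by linarith) (happrox n).le
      _ = 16 / q ^ 4 := by ring
  exact ⟨⟨height _ (by linarith) (by linarith), height _ (by linarith) (by linarith),
    height _ (by linarith) (by linarith), height _ (by linarith) (by linarith)⟩,
    α, β, hα, hβ, hα0, hβ0, hsep, hsep_le_q⟩
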